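/- arXiv:q-alg/9709015 — 3 statements merged into one kernel-verified Lean document; each statement's English description precedes it below -/
import Mathlib

section
/- In the reduced type-B Birman–Murakami–Wenzl algebra BB_n(R): the elements Y'_1, …, Y'_n pairwise commute, i.e. Y'_iY'_j = Y'_jY'_i for all i, j; moreover, for every i and every j with j ≠ i and j ≠ i−1, Y_i commutes with X_j and with e_j, and Y'_i commutes with X_j and with e_j. -/
namespace BMWB

inductive Gen (n : ℕ) : Type
  | X : Fin (n - 1) → Gen n
  | Xinv : Fin (n - 1) → Gen n
  | Y : 0 < n → Gen n
  | Yinv : 0 < n → Gen n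

variable (R : Type) [CommRing R]

def fX {n : ℕ} (i : Fin (n - 1)) : FreeAlgebra R (Gen n) := FreeAlgebra.ι R (Gen.X i)
def fXinv {n : ℕ} (i : Fin (n - 1)) : FreeAlgebra R (Gen n) := FreeAlgebra.ι R (Gen.Xinv i)
def fY {n : ℕ} (h : 0 < n) : FreeAlgebra R (Gen n) := FreeAlgebra.ι R (Gen.Y h)
def fYinv {n : ℕ} (h : 0 < n) : FreeAlgebra R (Gen n) := FreeAlgebra.ι R (Gen.Yinv h)
def fe {n : ℕ} (deli : R) (i : Fin (n - 1)) : FreeAlgebra R (Gen n) :=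
  1 - deli • (fX R i - fXinv R i)

variable (lam lami deli q0 q1 A : R) (n : ℕ)

/-- The defining relations of the reduced Birman-Murakami-Wenzl algebra of Coxeter type B. -/
inductive Rel : FreeAlgebra R (Gen n) → FreeAlgebra R (Gen n) → Prop
  | XXinv (i : Fin (n - 1)) : Rel (fX R i * fXinv R i) 1
  | XinvX (i : Fin (n - 1)) : Rel (fXinv R i * fX R i) 1
  | YYinv (h : 0 < n) : Rel (fY R h * fYinv R h) 1
  | YinvY (h : 0 < n) : Rel (fYinv R h * fY R h) 1
  | comm (i j : Fin (n - 1)) (h : (j : ℕ) + 1 < (i : ℕ)) :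
      Rel (fX R i * fX R j) (fX R j * fX R i)
  | braid (i j : Fin (n - 1)) (h : (i : ℕ) + 1 = (j : ℕ)) :
      Rel (fX R i * fX R j * fX R i) (fX R j * fX R i * fX R j)
  | Xe (i : Fin (n - 1)) : Rel (fX R i * fe R deli i) (lam • fe R deli i)
  | eX (i : Fin (n - 1)) : Rel (fe R deli i * fX R i) (lam • fe R deli i)
  | eXe (i j : Fin (n - 1)) (h : (j : ℕ) + 1 = (i : ℕ)) :
      Rel (fe R deli i * fX R j * fe R deli i) (lami • fe R deli i)
  | eXinve (i j : Fin (n - 1)) (h : (j : ℕ) + 1 = (i : ℕ)) :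
      Rel (fe R deli i * fXinv R j * fe R deli i) (lam • fe R deli i)
  | bYXYX (h : 0 < n) (i : Fin (n - 1)) (hi : (i : ℕ) = 0) :
      Rel (fX R i * fY R h * fX R i * fY R h) (fY R h * fX R i * fY R h * fX R i)
  | Ysq (h : 0 < n) : Rel (fY R h * fY R h) (q1 • fY R h + q0 • (1 : FreeAlgebra R (Gen n)))
  | YXYe (h : 0 < n) (i : Fin (n - 1)) (hi : (i : ℕ) = 0) :
      Rel (fY R h * fX R i * fY R h * fe R deli i) (fe R deli i)
  | Ycomm (h : 0 < n) (i : Fin (n - 1)) (hi : 0 < (i : ℕ)) :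
      Rel (fY R h * fX R i) (fX R i * fY R h)
  | eYe (h : 0 < n) (i : Fin (n - 1)) (hi : (i : ℕ) = 0) :
      Rel (fe R deli i * fY R h * fe R deli i) (A • fe R deli i)

/-- The reduced Birman-Murakami-Wenzl algebra of Coxeter type B, `BB_n(R)`,
presented by generators and relations. -/
abbrev BB : Type := RingQuot (Rel R lam lami deli q0 q1 A n)

noncomputable def mk : FreeAlgebra R (Gen n) →ₐ[R] BB R lam lami deli q0 q1 A n :=
  RingQuot.mkAlgHom R (Rel R lam lami deli q0 q1 A n)

/-- The generator `Y` (junk value `1` if `n = 0`). -/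
noncomputable def YY : BB R lam lami deli q0 q1 A n :=
  if h : 0 < n then mk R lam lami deli q0 q1 A n (fY R h) else 1

/-- The inverse of the generator `Y`. -/
noncomputable def YYi : BB R lam lami deli q0 q1 A n :=
  if h : 0 < n then mk R lam lami deli q0 q1 A n (fYinv R h) else 1

/-- The generator `X_i`, `1 ≤ i ≤ n-1` (junk value `1` out of range). -/
noncomputable def XX (i : ℕ) : BB R lam lami deli q0 q1 A n :=
  if h : i - 1 < n - 1 then mk R lam lami deli q0 q1 A n (fX R ⟨i - 1, h⟩) else 1

/-- The inverse `X_i⁻¹`. -/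
noncomputable def XXi (i : ℕ) : BB R lam lami deli q0 q1 A n :=
  if h : i - 1 < n - 1 then mk R lam lami deli q0 q1 A n (fXinv R ⟨i - 1, h⟩) else 1

/-- The element `e_i := 1 - δ⁻¹ (X_i - X_i⁻¹)`. -/
noncomputable def ee (i : ℕ) : BB R lam lami deli q0 q1 A n :=
  1 - deli • (XX R lam lami deli q0 q1 A n i - XXi R lam lami deli q0 q1 A n i)

/-- `Y_i := X_{i-1} ⋯ X_1 Y X_1⁻¹ ⋯ X_{i-1}⁻¹`. -/
noncomputable def Yn : ℕ → BB R lam lami deli q0 q1 A n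
  | 0 => 1
  | 1 => YY R lam lami deli q0 q1 A n
  | (k + 2) => XX R lam lami deli q0 q1 A n (k + 1) * Yn (k + 1) * XXi R lam lami deli q0 q1 A n (k + 1)

/-- `Y'_i := X_{i-1} ⋯ X_1 Y X_1 ⋯ X_{i-1}`. -/
noncomputable def Yp : ℕ → BB R lam lami deli q0 q1 A n
  | 0 => 1
  | 1 => YY R lam lami deli q0 q1 A n
  | (k + 2) => XX R lam lami deli q0 q1 A n (k + 1) * Yp (k + 1) * XX R lam lami deli q0 q1 A n (k + 1)

/-- The inverse of `Y'_i`. -/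
noncomputable def Ypi : ℕ → BB R lam lami deli q0 q1 A n
  | 0 => 1
  | 1 => YYi R lam lami deli q0 q1 A n
  | (k + 2) => XXi R lam lami deli q0 q1 A n (k + 1) * Ypi (k + 1) * XXi R lam lami deli q0 q1 A n (k + 1)

/-- The set of the images of the generators (and their inverses) of `BB_{m+1}` inside `BB_n`.
Its `Algebra.adjoin` is the image of the canonical algebra homomorphism `BB_{m+1} → BB_n`. -/
noncomputable def genSet (m : ℕ) : Set (BB R lam lami deli q0 q1 A n) :=
  {a | a = YY R lam lami deli q0 q1 A n ∨ a = YYi R lam lami deli q0 q1 A n ∨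
    ∃ i, 1 ≤ i ∧ i ≤ m ∧ (a = XX R lam lami deli q0 q1 A n i ∨ a = XXi R lam lami deli q0 q1 A n i)}

/-- The image of the canonical algebra homomorphism `BB_{m+1}(R) → BB_n(R)`, realized as the
subalgebra generated by the images of the generators `Y, Y⁻¹, X_1, …, X_m` (and inverses). -/
noncomputable def sub (m : ℕ) : Subalgebra R (BB R lam lami deli q0 q1 A n) :=
  Algebra.adjoin R (genSet R lam lami deli q0 q1 A n m)

/-- `X(i,j) = X_i X_{i+1} ⋯ X_j`. -/
noncomputable def Xprod (i j : ℕ) : BB R lam lami deli q0 q1 A n :=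
  ((List.range (j + 1 - i)).map (fun k => XX R lam lami deli q0 q1 A n (i + k))).prod

/-- `E(i,j) = e_i e_{i+2} ⋯ e_j`. -/
noncomputable def Eprod (i j : ℕ) : BB R lam lami deli q0 q1 A n :=
  ((List.range ((j - i) / 2 + 1)).map (fun k => ee R lam lami deli q0 q1 A n (i + 2 * k))).prod

/-- `H_1 = e_1`, `H_{m+1} = e_{m+1} X(m+2, 2m+1) X(m+1, 2m) H_m`. -/
noncomputable def H : ℕ → BB R lam lami deli q0 q1 A n
  | 0 => 1
  | 1 => ee R lam lami deli q0 q1 A n 1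
  | (k + 2) => ee R lam lami deli q0 q1 A n (k + 2) *
      Xprod R lam lami deli q0 q1 A n (k + 3) (2 * k + 3) *
      Xprod R lam lami deli q0 q1 A n (k + 2) (2 * k + 2) * H (k + 1)

section KeyMonoid
variable {M : Type*} [Monoid M] {a ai b bi W : M}

lemma aux_commute_inv {z x xi : M} (h : Commute z x) (hx : x * xi = 1) (hxi : xi * x = 1) :
    Commute z xi := by
  have h1 : z * xi = xi * x * z * xi := by rw [hxi, one_mul]
  calc z * xi = xi * x * z * xi := h1
    _ = xi * (z * x) * xi := by rw [mul_assoc xi x z, h.eq, ← mul_assoc]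
    _ = xi * z * (x * xi) := by simp [mul_assoc]
    _ = xi * z := by rw [hx, mul_one]

lemma key1 (hbr : a * b * a = b * a * b) (hW : b * W = W * b) :
    Commute (b * (a * W * a) * b) a := by
  have hbr' : ∀ x : M, a * (b * (a * x)) = b * (a * (b * x)) := fun x => by
    rw [← mul_assoc, ← mul_assoc, hbr, mul_assoc, mul_assoc]
  have hbr0 : a * (b * a) = b * (a * b) := by rw [← mul_assoc, hbr, mul_assoc]
  have hW' : ∀ x : M, b * (W * x) = W * (b * x) := fun x => by
    rw [← mul_assoc, hW, mul_assoc]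
  show (b * (a * W * a) * b) * a = a * (b * (a * W * a) * b)
  simp only [mul_assoc]
  rw [hbr' (W * (a * b)), hW' (a * b), ← hbr0]

lemma key2 (haai : a * ai = 1) (haia : ai * a = 1) (hbbi : b * bi = 1) (hbib : bi * b = 1)
    (hbr : a * b * a = b * a * b) (hW : b * W = W * b) :
    Commute (b * (a * W * ai) * bi) a := by
  have hbr' : ∀ x : M, a * (b * (a * x)) = b * (a * (b * x)) := fun x => by
    rw [← mul_assoc, ← mul_assoc, hbr, mul_assoc, mul_assoc]
  have hW' : ∀ x : M, b * (W * x) = W * (b * x) := fun x => by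
    rw [← mul_assoc, hW, mul_assoc]
  set Z := b * (a * W * ai) * bi with hZ
  have cancel : ∀ z1 z2 : M, z1 * (b * a) = z2 * (b * a) → z1 = z2 := by
    intro z1 z2 h
    have h2 : z1 * (b * a) * (ai * bi) = z2 * (b * a) * (ai * bi) := by rw [h]
    rw [mul_assoc, mul_assoc, mul_assoc, mul_assoc, ← mul_assoc a ai bi, haai, one_mul,
      hbbi, mul_one, mul_one] at h2
    exact h2
  show Z * a = a * Z
  apply cancel
  have e1 : Z * a * (b * a) = b * (a * (W * (ai * (bi * (a * (b * a)))))) := by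
    rw [hZ]; simp only [mul_assoc]
  have e2 : a * Z * (b * a) = a * (b * (a * (W * (ai * (bi * (b * a)))))) := by
    rw [hZ]; simp only [mul_assoc]
  rw [e1, e2]
  have r1 : ai * (bi * (b * a)) = 1 := by rw [← mul_assoc bi b a, hbib, one_mul, haia]
  have hbr0 : a * (b * a) = b * (a * b) := by rw [← mul_assoc, hbr, mul_assoc]
  rw [r1, mul_one, hbr0, ← mul_assoc bi b (a * b), hbib, one_mul,
    ← mul_assoc ai a b, haia, one_mul, ← hW, ← hbr' W]

lemma key3 (hbr : a * b * a = b * a * b) (hW : b * W = W * b)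
    (hIH : W * a * W * a = a * W * a * W) :
    (a * W * a) * b * (a * W * a) * b = b * (a * W * a) * b * (a * W * a) := by
  have hbr' : ∀ x : M, a * (b * (a * x)) = b * (a * (b * x)) := fun x => by
    rw [← mul_assoc, ← mul_assoc, hbr, mul_assoc, mul_assoc]
  have hbr0 : a * (b * a) = b * (a * b) := by rw [← mul_assoc, hbr, mul_assoc]
  have hW' : ∀ x : M, b * (W * x) = W * (b * x) := fun x => by
    rw [← mul_assoc, hW, mul_assoc]
  have hIH' : ∀ x : M, W * (a * (W * (a * x))) = a * (W * (a * (W * x))) := fun x => by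
    rw [← mul_assoc, ← mul_assoc, ← mul_assoc, hIH, mul_assoc, mul_assoc, mul_assoc]
  simp only [mul_assoc]
  rw [hbr' (W * (a * b)), ← hW' (a * (b * (W * (a * b)))), hW' (a * b), ← hbr0,
    hIH' (b * a), hbr' (W * (a * (W * (b * a)))), ← hW' a, hW' (a * (b * (W * a))),
    ← hbr' (W * a)]
end KeyMonoid

section BBAux
variable (R : Type) [CommRing R] (lam lami deli q0 q1 A : R) (n : ℕ)

local notation "XB" => XX R lam lami deli q0 q1 A n
local notation "XBi" => XXi R lam lami deli q0 q1 A n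
local notation "YB" => YY R lam lami deli q0 q1 A n
local notation "YpB" => Yp R lam lami deli q0 q1 A n
local notation "YnB" => Yn R lam lami deli q0 q1 A n
local notation "eB" => ee R lam lami deli q0 q1 A n
local notation "mkB" => mk R lam lami deli q0 q1 A n


lemma Yp_one : YpB 1 = YB := rfl
lemma Yp_succ (k : ℕ) : YpB (k + 2) = XB (k + 1) * YpB (k + 1) * XB (k + 1) := rfl
lemma Yp_succ' (m : ℕ) : YpB (m + 3) = XB (m + 2) * YpB (m + 2) * XB (m + 2) := rfl
lemma Yn_one : YnB 1 = YB := rfl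
lemma Yn_succ (k : ℕ) : YnB (k + 2) = XB (k + 1) * YnB (k + 1) * XBi (k + 1) := rfl
lemma Yn_succ' (m : ℕ) : YnB (m + 3) = XB (m + 2) * YnB (m + 2) * XBi (m + 2) := rfl

lemma bXinv (j : ℕ) : XB j * XBi j = 1 ∧ XBi j * XB j = 1 := by
  by_cases h : j - 1 < n - 1
  · rw [XX, XXi, dif_pos h, dif_pos h]
    constructor
    · rw [← map_mul, ← map_one (mkB)]
      exact RingQuot.mkAlgHom_rel R (Rel.XXinv ⟨j - 1, h⟩)
    · rw [← map_mul, ← map_one (mkB)]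
      exact RingQuot.mkAlgHom_rel R (Rel.XinvX ⟨j - 1, h⟩)
  · rw [XX, XXi, dif_neg h, dif_neg h, mul_one]
    exact ⟨rfl, rfl⟩

lemma bXcomm (a b : ℕ) (ha : 1 ≤ a) (h : a + 1 < b) : Commute (XB a) (XB b) := by
  by_cases hb : b - 1 < n - 1
  · have haa : a - 1 < n - 1 := by omega
    rw [XX, XX, dif_pos hb, dif_pos haa]
    show _ * _ = _ * _
    rw [← map_mul, ← map_mul]
    exact (RingQuot.mkAlgHom_rel R (Rel.comm ⟨b - 1, hb⟩ ⟨a - 1, haa⟩ (by simp; omega))).symm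
  · have hb1 : XB b = 1 := by rw [XX]; exact dif_neg hb
    rw [hb1]
    exact Commute.one_right _

lemma bXbraid (a : ℕ) (ha : 1 ≤ a) (h : a < n - 1) :
    XB a * XB (a + 1) * XB a = XB (a + 1) * XB a * XB (a + 1) := by
  have h1 : a - 1 < n - 1 := by omega
  have h2 : a + 1 - 1 < n - 1 := by omega
  rw [XX, XX, dif_pos h1, dif_pos h2, ← map_mul, ← map_mul, ← map_mul, ← map_mul]
  exact RingQuot.mkAlgHom_rel R (Rel.braid ⟨a - 1, h1⟩ ⟨a + 1 - 1, h2⟩ (by simp; omega))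

lemma bYX (a : ℕ) (h : 2 ≤ a) : Commute YB (XB a) := by
  by_cases ha : a - 1 < n - 1
  · have hn : 0 < n := by omega
    rw [YY, XX, dif_pos hn, dif_pos ha]
    show _ * _ = _ * _
    rw [← map_mul, ← map_mul]
    exact RingQuot.mkAlgHom_rel R (Rel.Ycomm hn ⟨a - 1, ha⟩ (by simp; omega))
  · rw [XX, dif_neg ha]
    exact Commute.one_right _

lemma bYXYX : XB 1 * YB * XB 1 * YB = YB * XB 1 * YB * XB 1 := by
  by_cases h : 1 - 1 < n - 1
  · have hn : 0 < n := by omega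
    rw [YY, XX, dif_pos hn, dif_pos h]
    rw [← map_mul, ← map_mul, ← map_mul, ← map_mul, ← map_mul, ← map_mul]
    exact RingQuot.mkAlgHom_rel R (Rel.bYXYX hn ⟨1 - 1, h⟩ rfl)
  · rw [XX, dif_neg h]
    simp

lemma bMain : ∀ i, 1 ≤ i → i ≤ n → ∀ j, 1 ≤ j → j ≠ i → j + 1 ≠ i →
    Commute (YpB i) (XB j) ∧ Commute (YnB i) (XB j) := by
  intro i
  induction i using Nat.strong_induction_on with
  | _ i IH =>
    match i with
    | 0 => intro h0; omega
    | 1 =>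
      intro _ _ j hj1 hj2 _
      have h2 : 2 ≤ j := by omega
      exact ⟨bYX R lam lami deli q0 q1 A n j h2, bYX R lam lami deli q0 q1 A n j h2⟩
    | (k + 2) =>
      intro _ hin j hj1 hj2 hj3
      by_cases hjk : j = k
      · -- braid case: k = m+1 since j = k and j ≥ 1
        subst hjk
        obtain ⟨m, rfl⟩ : ∃ m, j = m + 1 := ⟨j - 1, by omega⟩
        have hbr := bXbraid R lam lami deli q0 q1 A n (m + 1) (by omega) (by omega)
        have hIHp := IH (m + 1) (by omega) (by omega) (by omega) (m + 2) (by omega)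
          (by omega) (by omega)
        have hinv1 := bXinv R lam lami deli q0 q1 A n (m + 1)
        have hinv2 := bXinv R lam lami deli q0 q1 A n (m + 2)
        constructor
        · rw [Yp_succ', Yp_succ]
          exact key1 hbr hIHp.1.symm.eq
        · rw [show m + 1 + 2 = m + 3 from rfl, Yn_succ', Yn_succ]
          exact key2 hinv1.1 hinv1.2 hinv2.1 hinv2.2 hbr hIHp.2.symm.eq
      · -- generic case: j < k or j ≥ k + 3
        have h1 : Commute (XB j) (XB (k + 1)) := by
          rcases Nat.lt_or_ge j k with h | h
          · exact bXcomm R lam lami deli q0 q1 A n j (k + 1) hj1 (by omega)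
          · exact (bXcomm R lam lami deli q0 q1 A n (k + 1) j (by omega) (by omega)).symm
        have hinv := bXinv R lam lami deli q0 q1 A n (k + 1)
        have h2 : Commute (XB j) (XBi (k + 1)) := aux_commute_inv h1 hinv.1 hinv.2
        have hIH := IH (k + 1) (by omega) (by omega) (by omega) j hj1 (by omega) (by omega)
        constructor
        · rw [Yp_succ]
          exact (h1.symm.mul_left hIH.1).mul_left h1.symm
        · rw [Yn_succ]
          exact (h1.symm.mul_left hIH.2).mul_left h2.symm

lemma bKp : ∀ i, 1 ≤ i → i + 1 ≤ n →
    YpB i * XB i * YpB i * XB i = XB i * YpB i * XB i * YpB i := by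
  intro i
  induction i using Nat.strong_induction_on with
  | _ i IH =>
    match i with
    | 0 => intro h0; omega
    | 1 =>
      intro _ _
      rw [Yp_one]
      exact (bYXYX R lam lami deli q0 q1 A n).symm
    | (k + 2) =>
      intro _ hn
      have hbr := bXbraid R lam lami deli q0 q1 A n (k + 1) (by omega) (by omega)
      have hW := (bMain R lam lami deli q0 q1 A n (k + 1) (by omega) (by omega) (k + 2)
        (by omega) (by omega) (by omega)).1.symm.eq
      have hIH := IH (k + 1) (by omega) (by omega) (by omega)
      rw [Yp_succ]
      exact key3 hbr hW hIH

lemma bPair : ∀ j, j ≤ n → ∀ i, i < j → Commute (YpB i) (YpB j) := by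
  intro j
  induction j using Nat.strong_induction_on with
  | _ j IH =>
    match j with
    | 0 => intro _ i hi; omega
    | 1 =>
      intro _ i hi
      have : i = 0 := by omega
      subst this
      rw [show YpB 0 = 1 from rfl]
      exact Commute.one_left _
    | (k + 2) =>
      intro hn i hij
      rcases Nat.eq_or_lt_of_le (Nat.lt_succ_iff.mp hij) with hik | hik
      · -- i = k + 1 : adjacent case
        subst hik
        have hKp := bKp R lam lami deli q0 q1 A n (k + 1) (by omega) (by omega)
        show YpB (k + 1) * YpB (k + 2) = YpB (k + 2) * YpB (k + 1)
        rw [Yp_succ]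
        simp only [mul_assoc] at hKp ⊢
        exact hKp
      · -- i < k + 1
        rcases Nat.eq_zero_or_pos i with h0 | h0
        · subst h0
          rw [show YpB 0 = 1 from rfl]
          exact Commute.one_left _
        · have h1 : Commute (YpB i) (XB (k + 1)) :=
            (bMain R lam lami deli q0 q1 A n i h0 (by omega) (k + 1) (by omega) (by omega)
              (by omega)).1
          have h2 := IH (k + 1) (by omega) (by omega) i hik
          rw [Yp_succ]
          exact (h1.mul_right h2).mul_right h1

lemma bCommE {z : BB R lam lami deli q0 q1 A n} (j : ℕ) (hx : Commute z (XB j)) :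
    Commute z (eB j) := by
  have h2 : Commute z (XBi j) :=
    aux_commute_inv hx (bXinv R lam lami deli q0 q1 A n j).1 (bXinv R lam lami deli q0 q1 A n j).2
  rw [ee]
  exact (Commute.one_right z).sub_right ((hx.sub_right h2).smul_right deli)
end BBAux

/-- In `BB_n(R)`: the elements `Y'_1, …, Y'_n` pairwise commute, and `Y_i`, `Y'_i` commute
with `X_j` and `e_j` for `j ≠ i, i−1` (Lemma 4, (\ref{lem2f})–(\ref{lem2hh})). -/
theorem BB_Yprime_commutation (R : Type) [CommRing R] [IsDomain R]
    (q qi lam lami del deli q0 q0i q1 A x : R)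
    (hq : q * qi = 1) (hlam : lam * lami = 1) (hdel : del * deli = 1) (hq0u : q0 * q0i = 1)
    (hdelta : del = q - qi) (hx : x * del = del - lam + lami) (n : ℕ) :
    (∀ i j, 1 ≤ i → i ≤ n → 1 ≤ j → j ≤ n →
      Yp R lam lami deli q0 q1 A n i * Yp R lam lami deli q0 q1 A n j = Yp R lam lami deli q0 q1 A n j * Yp R lam lami deli q0 q1 A n i) ∧
    (∀ i j, 1 ≤ i → i ≤ n → 1 ≤ j → j ≤ n - 1 → j ≠ i → j ≠ i - 1 →
      Commute (Yn R lam lami deli q0 q1 A n i) (XX R lam lami deli q0 q1 A n j) ∧ Commute (Yn R lam lami deli q0 q1 A n i) (ee R lam lami deli q0 q1 A n j) ∧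
      Commute (Yp R lam lami deli q0 q1 A n i) (XX R lam lami deli q0 q1 A n j) ∧ Commute (Yp R lam lami deli q0 q1 A n i) (ee R lam lami deli q0 q1 A n j)) := by
  constructor
  · intro i j _ hin _ hjn
    rcases lt_trichotomy i j with h | h | h
    · exact (bPair R lam lami deli q0 q1 A n j hjn i h).eq
    · rw [h]
    · exact ((bPair R lam lami deli q0 q1 A n i hin j h).eq).symm
  · intro i j hi1 hin hj1 _ h1 h2
    have h3 : j + 1 ≠ i := by omega
    obtain ⟨hp, hnn⟩ := bMain R lam lami deli q0 q1 A n i hi1 hin j hj1 h1 h3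
    exact ⟨hnn, bCommE R lam lami deli q0 q1 A n j hnn, hp,
      bCommE R lam lami deli q0 q1 A n j hp⟩

end BMWB
end

section
/- In the reduced type-B Birman–Murakami–Wenzl algebra BB_n(R), for every i with 1 ≤ i ≤ n−1: e_i = e_iY_iX_iY_i = Y_iX_iY_ie_i and e_i = e_iY'_iX_iY'_i = Y'_iX_iY'_ie_i. -/
namespace BMWB

variable (R : Type) [CommRing R]

variable (lam lami deli q0 q1 A : R) (n : ℕ)

section Abstract

variable {S : Type} [CommRing S] {M : Type} [Ring M] [Algebra S M]

private lemma smul_cancel' {dl dli : S} (hdl : dl * dli = 1) {z w : M}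
    (h : dl • z = dl • w) : z = w := by
  have h2 := congrArg (fun t => dli • t) h
  simpa [smul_smul, mul_comm dli dl, hdl] using h2

private lemma unit_shift {la li : S} (hla : la * li = 1) {z w : M} (h : z = la • w) :
    li • z = w := by
  rw [h, smul_smul, mul_comm li la, hla, one_smul]

private lemma key_lemma {la li dl dli xx : S} {a ai b bi ea eb : M}
    (hla : la * li = 1) (hdl : dl * dli = 1) (hxx : xx * dl = dl - la + li)
    (haai : a * ai = 1) (haia : ai * a = 1) (hbbi : b * bi = 1) (hbib : bi * b = 1)
    (hbraid : a * b * a = b * a * b)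
    (hea : ea = 1 - dli • (a - ai)) (heb : eb = 1 - dli • (b - bi))
    (heaa : ea * a = la • ea) (haea : a * ea = la • ea)
    (hebb : eb * b = la • eb)
    (hebaeb : eb * a * eb = li • eb) (hebaieb : eb * ai * eb = la • eb) :
    ea * (b * a) = ea * (bi * ai) := by
  have ha1 : ∀ z : M, a * (ai * z) = z := fun z => by rw [← mul_assoc, haai, one_mul]
  have ha2 : ∀ z : M, ai * (a * z) = z := fun z => by rw [← mul_assoc, haia, one_mul]
  have hb1 : ∀ z : M, b * (bi * z) = z := fun z => by rw [← mul_assoc, hbbi, one_mul]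
  have hb2 : ∀ z : M, bi * (b * z) = z := fun z => by rw [← mul_assoc, hbib, one_mul]
  have hbr : a * (b * a) = b * (a * b) := by simpa [mul_assoc] using hbraid
  -- braid consequences, in applied form
  have q1 : ∀ z : M, ai * (b * (a * z)) = b * (a * (bi * z)) := by
    intro z
    have h := congrArg (fun t => ai * (t * (bi * z))) hbraid
    simpa [mul_assoc, ha1, ha2, hb1, hb2, haai, haia, hbbi, hbib] using h.symm
  have q3 : ∀ z : M, ai * (bi * (ai * z)) = bi * (ai * (bi * z)) := by
    intro z
    have h := congrArg (fun t => ai * (bi * (ai * (t * (bi * (ai * (bi * z))))))) hbraid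
    simpa [mul_assoc, ha1, ha2, hb1, hb2, haai, haia, hbbi, hbib] using h.symm
  have q4 : ∀ z : M, a * (bi * (ai * z)) = bi * (ai * (b * z)) := by
    intro z
    have h := congrArg (fun t => bi * (ai * (t * (bi * (ai * z))))) hbraid
    simpa [mul_assoc, ha1, ha2, hb1, hb2, haai, haia, hbbi, hbib] using h
  have q7a : ∀ z : M, b * (a * (b * (a * z))) = a * (b * (a * (a * z))) := by
    intro z
    have h := congrArg (fun t => t * (a * z)) hbraid
    simpa [mul_assoc] using h.symm
  have q7b : ∀ z : M, bi * (a * (b * (a * z))) = a * (b * z) := by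
    intro z
    have h := congrArg (fun t => bi * (t * z)) hbraid
    simpa [mul_assoc, ha1, ha2, hb1, hb2, haai, haia, hbbi, hbib] using h
  have q8a : ∀ z : M, a * (b * (a * (b * z))) = a * (a * (b * (a * z))) := by
    intro z
    have h := congrArg (fun t => a * (t * z)) hbraid
    simpa [mul_assoc] using h.symm
  have q8b : ∀ z : M, a * (b * (a * (bi * z))) = b * (a * z) := by
    intro z
    have h := congrArg (fun t => t * (bi * z)) hbraid
    simpa [mul_assoc, ha1, ha2, hb1, hb2, haai, haia, hbbi, hbib] using h
  -- conjugation lemmas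
  have conjsub : ∀ z : M, (a - ai) * z = z * (b - bi) → ea * z = z * eb := by
    intro z h
    rw [hea, heb, sub_mul, one_mul, smul_mul_assoc, mul_sub, mul_one, mul_smul_comm, h]
  have q10 : ai * (b * a) = b * (a * bi) := by simpa using q1 1
  have c1 : ea * (b * a) = (b * a) * eb := by
    apply conjsub
    rw [sub_mul, mul_sub]
    simp only [mul_assoc]
    rw [hbr, q10]
  have q30 : ai * (bi * ai) = bi * (ai * bi) := by simpa using q3 1
  have q40 : a * (bi * ai) = bi * (ai * b) := by simpa using q4 1
  have q7a0 : b * (a * (b * a)) = a * (b * (a * a)) := by simpa using q7a 1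
  have q7b0 : bi * (a * (b * a)) = a * b := by simpa using q7b 1
  have c2 : ea * (bi * ai) = (bi * ai) * eb := by
    apply conjsub
    rw [sub_mul, mul_sub]
    simp only [mul_assoc]
    rw [← q40, ← q30]
  have c3 : eb * (a * (b * a)) = (a * (b * a)) * ea := by
    rw [heb, hea, sub_mul, one_mul, smul_mul_assoc, mul_sub, mul_one, mul_smul_comm]
    congr 2
    rw [sub_mul, mul_sub]
    simp only [mul_assoc]
    rw [q7a0, q7b0]
    simp only [haai, mul_one]
  -- eigen relations
  have heaai : ea * ai = li • ea := by
    have h0 := congrArg (fun t => t * ai) heaa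
    simp only [mul_assoc, haai, mul_one, smul_mul_assoc] at h0
    exact (unit_shift hla h0).symm
  have haiea : ai * ea = li • ea := by
    have h0 := congrArg (fun t => ai * t) haea
    simp only [ha2, mul_smul_comm] at h0
    exact (unit_shift hla h0).symm
  have hebbi : eb * bi = li • eb := by
    have h0 := congrArg (fun t => t * bi) hebb
    simp only [mul_assoc, hbbi, mul_one, smul_mul_assoc] at h0
    exact (unit_shift hla h0).symm
  -- delta identities
  have hdlea : dl • ea = dl • (1 : M) - (a - ai) := by
    rw [hea, smul_sub, smul_smul, hdl, one_smul]
  have hdleb : dl • eb = dl • (1 : M) - (b - bi) := by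
    rw [heb, smul_sub, smul_smul, hdl, one_smul]
  have hai'' : ai = a - dl • (1 : M) + dl • ea := by rw [hdlea]; abel
  have hbi'' : bi = b - dl • (1 : M) + dl • eb := by rw [hdleb]; abel
  have hxai : ∀ z : M, z * ai = z * a - dl • z + dl • (z * ea) := by
    intro z
    rw [hai'', mul_add, mul_sub, mul_smul_comm, mul_smul_comm, mul_one]
  have hxbi : ∀ z : M, z * bi = z * b - dl • z + dl • (z * eb) := by
    intro z
    rw [hbi'', mul_add, mul_sub, mul_smul_comm, mul_smul_comm, mul_one]
  -- conjugation by w = a*b*a, applied form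
  have c3' : ∀ z : M, eb * (a * (b * (a * z))) = a * (b * (a * (ea * z))) := by
    intro z
    have h := congrArg (fun t => t * z) c3
    simpa [mul_assoc] using h
  have c30 : a * (b * (a * ea)) = eb * (a * (b * a)) := by simpa using (c3' 1).symm
  have canw : ∀ {u v : M}, a * (b * (a * u)) = a * (b * (a * v)) → u = v := by
    intro u v h
    have h2 := congrArg (fun t => ai * (bi * (ai * t))) h
    simpa [ha2, hb2] using h2
  have k1 : ea * ea = xx • ea := by
    apply smul_cancel' hdl
    calc dl • (ea * ea) = ea * (dl • ea) := (mul_smul_comm dl ea ea).symm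
      _ = ea * (dl • (1:M)) - (ea * a - ea * ai) := by rw [hdlea, mul_sub, mul_sub]
      _ = dl • ea - la • ea + li • ea := by
          rw [heaa, heaai, mul_smul_comm, mul_one]; abel
      _ = dl • (xx • ea) := by match_scalars; linear_combination -hxx
  have k2 : ea * (b * ea) = li • ea := by
    apply canw
    calc a * (b * (a * (ea * (b * ea))))
        = eb * (a * (b * (a * (b * ea)))) := (c3' (b * ea)).symm
      _ = eb * (a * (a * (b * (a * ea)))) := by rw [q8a ea]
      _ = eb * (a * (eb * (a * (b * a)))) := by rw [c30]
      _ = (eb * a * eb) * (a * (b * a)) := by simp only [mul_assoc]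
      _ = li • (eb * (a * (b * a))) := by rw [hebaeb, smul_mul_assoc]
      _ = li • (a * (b * (a * ea))) := by rw [← c30]
      _ = a * (b * (a * (li • ea))) := by simp only [mul_smul_comm]
  have k2' : ea * (bi * ea) = la • ea := by
    apply canw
    calc a * (b * (a * (ea * (bi * ea))))
        = eb * (a * (b * (a * (bi * ea)))) := (c3' (bi * ea)).symm
      _ = eb * (b * (a * ea)) := by rw [q8b ea]
      _ = eb * (ai * (a * (b * (a * ea)))) := by rw [ha2 (b * (a * ea))]
      _ = eb * (ai * (eb * (a * (b * a)))) := by rw [c30]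
      _ = (eb * ai * eb) * (a * (b * a)) := by simp only [mul_assoc]
      _ = la • (eb * (a * (b * a))) := by rw [hebaieb, smul_mul_assoc]
      _ = la • (a * (b * (a * ea))) := by rw [← c30]
      _ = a * (b * (a * (la • ea))) := by simp only [mul_smul_comm]
  have k3 : ea * (eb * ea) = ea := by
    apply smul_cancel' hdl
    calc dl • (ea * (eb * ea)) = ea * ((dl • eb) * ea) := by
          rw [smul_mul_assoc, mul_smul_comm]
      _ = ea * ((dl • (1:M)) * ea) - (ea * (b * ea) - ea * (bi * ea)) := by
          rw [hdleb, sub_mul, sub_mul, mul_sub, mul_sub]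
      _ = dl • (ea * ea) - li • ea + la • ea := by
          rw [k2, k2', smul_mul_assoc, one_mul, mul_smul_comm]; abel
      _ = (dl * xx) • ea - li • ea + la • ea := by rw [k1, smul_smul]
      _ = dl • ea := by match_scalars; linear_combination hxx
  have haa : a * a = 1 + dl • a - (dl * la) • ea := by
    have h := congrArg (fun t => a * t) hdlea
    simp only [mul_sub, mul_smul_comm, mul_one, haai] at h
    rw [haea, smul_smul] at h
    rw [h]; abel
  have hxa : ∀ z : M, z * a = z * ai + dl • z - dl • (z * ea) := by
    intro z; rw [hxai z]; abel
  -- eigen-products of the atoms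
  have hVb : (ea * eb) * b = la • (ea * eb) := by rw [mul_assoc, hebb, mul_smul_comm]
  have hVbi : (ea * eb) * bi = li • (ea * eb) := by rw [mul_assoc, hebbi, mul_smul_comm]
  have hUb : (ea * (b * a)) * b = la • (ea * (b * a)) := by
    calc (ea * (b * a)) * b = ea * (a * (b * a)) := by
          rw [mul_assoc, mul_assoc, ← hbr]
      _ = la • (ea * (b * a)) := by rw [← mul_assoc, heaa, smul_mul_assoc]
  have hUbi : (ea * (b * a)) * bi = li • (ea * (b * a)) := by
    calc (ea * (b * a)) * bi = ea * (ai * (b * a)) := by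
          rw [mul_assoc, mul_assoc, ← q10]
      _ = li • (ea * (b * a)) := by rw [← mul_assoc, heaai, smul_mul_assoc]
  have hWb : (ea * (bi * ai)) * b = la • (ea * (bi * ai)) := by
    calc (ea * (bi * ai)) * b = ea * (a * (bi * ai)) := by
          rw [mul_assoc, mul_assoc, q40]
      _ = la • (ea * (bi * ai)) := by rw [← mul_assoc, heaa, smul_mul_assoc]
  have hWbi : (ea * (bi * ai)) * bi = li • (ea * (bi * ai)) := by
    calc (ea * (bi * ai)) * bi = ea * (ai * (bi * ai)) := by
          rw [mul_assoc, mul_assoc, q30]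
      _ = li • (ea * (bi * ai)) := by rw [← mul_assoc, heaai, smul_mul_assoc]
  have hVea : (ea * eb) * ea = ea := by rw [mul_assoc, k3]
  have hUea : (ea * (b * a)) * ea = ea := by
    rw [mul_assoc, mul_assoc, haea, mul_smul_comm, mul_smul_comm, k2, smul_smul, hla,
      one_smul]
  have hUa : (ea * (b * a)) * a = ea * b + dl • (ea * (b * a)) - dl • ea := by
    calc (ea * (b * a)) * a = ea * (b * (a * a)) := by simp only [mul_assoc]
      _ = ea * (b * (1 + dl • a - (dl * la) • ea)) := by rw [haa]
      _ = ea * b + dl • (ea * (b * a)) - (dl * la) • (ea * (b * ea)) := by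
          simp only [mul_add, mul_sub, mul_one, mul_smul_comm]
      _ = ea * b + dl • (ea * (b * a)) - dl • ea := by
          rw [k2, smul_smul]
          match_scalars <;> (first | ring1 | linear_combination dl * hla | linear_combination -dl * hla | linear_combination hxx | linear_combination -hxx)
  have hbi1 : ea * bi = ea * b - dl • ea + dl • (ea * eb) := hxbi ea
  have sub2 : (ea * bi) * a = ea * (bi * ai) + dl • (ea * bi) - (dl * la) • ea := by
    rw [hxa (ea * bi), mul_assoc, mul_assoc, k2', smul_smul]
  have hVa : dl • ((ea * eb) * a) =
      ea * (bi * ai) - ea * (b * a) + dl • (ea * b) - (dl * dl) • ea +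
        (dl * dl) • (ea * eb) := by
    have e1 : ea * (dl • eb) = dl • ea - ea * b + ea * bi := by
      rw [hdleb, mul_sub, mul_sub, mul_smul_comm, mul_one]; abel
    calc dl • ((ea * eb) * a) = (ea * (dl • eb)) * a := by
          rw [← smul_mul_assoc, ← mul_smul_comm]
      _ = (dl • ea - ea * b + ea * bi) * a := by rw [e1]
      _ = dl • (la • ea) - ea * (b * a) +
            (ea * (bi * ai) + dl • (ea * bi) - (dl * la) • ea) := by
          rw [add_mul, sub_mul, smul_mul_assoc, heaa, mul_assoc, sub2]
      _ = ea * (bi * ai) - ea * (b * a) + dl • (ea * b) - (dl * dl) • ea +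
            (dl * dl) • (ea * eb) := by
          rw [hbi1]
          match_scalars <;> (first | ring1 | linear_combination dl * hla | linear_combination -dl * hla | linear_combination hxx | linear_combination -hxx)
  have hUai : (ea * (b * a)) * ai = ea * b := by
    rw [mul_assoc, mul_assoc, haai, mul_one]
  have hVai : dl • ((ea * eb) * ai) = ea * (bi * ai) - ea * (b * a) + dl • (ea * b) := by
    calc dl • ((ea * eb) * ai) = dl • ((ea * eb) * a - dl • (ea * eb) + dl • ea) := by
          rw [hxai (ea * eb), hVea]
      _ = dl • ((ea * eb) * a) - (dl * dl) • (ea * eb) + (dl * dl) • ea := by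
          rw [smul_add, smul_sub, smul_smul, smul_smul]
      _ = ea * (bi * ai) - ea * (b * a) + dl • (ea * b) := by rw [hVa]; abel
  -- products with a final eb
  have hVaeb : ((ea * eb) * a) * eb = li • (ea * eb) := by
    have h : ((ea * eb) * a) * eb = ea * (eb * a * eb) := by simp only [mul_assoc]
    rw [h, hebaeb, mul_smul_comm]
  have hVaieb : ((ea * eb) * ai) * eb = la • (ea * eb) := by
    have h : ((ea * eb) * ai) * eb = ea * (eb * ai * eb) := by simp only [mul_assoc]
    rw [h, hebaieb, mul_smul_comm]
  have hUaeb : ((ea * (b * a)) * a) * eb = li • (ea * (b * a)) := by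
    calc ((ea * (b * a)) * a) * eb = (ea * (b * a)) * (a * eb) := by rw [mul_assoc]
      _ = ((b * a) * eb) * (a * eb) := by rw [c1]
      _ = (b * a) * (eb * a * eb) := by simp only [mul_assoc]
      _ = li • ((b * a) * eb) := by rw [hebaeb, mul_smul_comm]
      _ = li • (ea * (b * a)) := by rw [← c1]
  have hUaieb : ((ea * (b * a)) * ai) * eb = la • (ea * (b * a)) := by
    calc ((ea * (b * a)) * ai) * eb = (ea * (b * a)) * (ai * eb) := by rw [mul_assoc]
      _ = ((b * a) * eb) * (ai * eb) := by rw [c1]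
      _ = (b * a) * (eb * ai * eb) := by simp only [mul_assoc]
      _ = la • ((b * a) * eb) := by rw [hebaieb, mul_smul_comm]
      _ = la • (ea * (b * a)) := by rw [← c1]
  -- the two scalar equations
  have hP : dl • ((ea * eb) * a) - dl • ((ea * (b * a)) * a) =
      (dl * dl) • (ea * eb) - ((dl * dl) + 1) • (ea * (b * a)) + ea * (bi * ai) := by
    rw [hVa, hUa]
    module
  have hP2 : dl • ((ea * eb) * ai) - dl • ((ea * (b * a)) * ai) =
      ea * (bi * ai) - ea * (b * a) := by
    rw [hVai, hUai]
    module
  have EqI : (dl * (dl * li)) • (ea * eb) - (dl * (dl * li)) • (ea * (b * a)) =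
      (xx * dl) • ((dl * dl) • (ea * eb) - ((dl * dl) + 1) • (ea * (b * a)) +
        ea * (bi * ai)) := by
    have e1 : (dl • ((ea * eb) * a) - dl • ((ea * (b * a)) * a)) * (dl • eb) =
        (dl * (dl * li)) • (ea * eb) - (dl * (dl * li)) • (ea * (b * a)) := by
      rw [sub_mul, smul_mul_assoc, smul_mul_assoc, mul_smul_comm, mul_smul_comm,
        hVaeb, hUaeb]
      simp only [smul_smul]
    have e2 : (dl • ((ea * eb) * a) - dl • ((ea * (b * a)) * a)) * (dl • eb) =
        (xx * dl) • ((dl * dl) • (ea * eb) - ((dl * dl) + 1) • (ea * (b * a)) +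
          ea * (bi * ai)) := by
      rw [hP, hdleb, mul_sub, mul_sub, mul_smul_comm, mul_one]
      rw [add_mul, sub_mul, add_mul, sub_mul, smul_mul_assoc, smul_mul_assoc,
        smul_mul_assoc, smul_mul_assoc, hVb, hUb, hWb, hVbi, hUbi, hWbi]
      match_scalars <;>
        first
        | ring1
        | linear_combination (dl*dl) * hxx
        | linear_combination -(dl*dl) * hxx
        | linear_combination ((dl*dl)+1) * hxx
        | linear_combination -((dl*dl)+1) * hxx
        | linear_combination hxx
        | linear_combination -hxx
    exact e1.symm.trans e2
  have EqII : (dl * (dl * la)) • (ea * eb) - (dl * (dl * la)) • (ea * (b * a)) =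
      (xx * dl) • (ea * (bi * ai) - ea * (b * a)) := by
    have e1 : (dl • ((ea * eb) * ai) - dl • ((ea * (b * a)) * ai)) * (dl • eb) =
        (dl * (dl * la)) • (ea * eb) - (dl * (dl * la)) • (ea * (b * a)) := by
      rw [sub_mul, smul_mul_assoc, smul_mul_assoc, mul_smul_comm, mul_smul_comm,
        hVaieb, hUaieb]
      simp only [smul_smul]
    have e2 : (dl • ((ea * eb) * ai) - dl • ((ea * (b * a)) * ai)) * (dl • eb) =
        (xx * dl) • (ea * (bi * ai) - ea * (b * a)) := by
      rw [hP2, hdleb, mul_sub, mul_sub, mul_smul_comm, mul_one]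
      rw [sub_mul, sub_mul, hWb, hUb, hWbi, hUbi]
      match_scalars <;> (first | ring1 | linear_combination hxx | linear_combination -hxx)
    exact e1.symm.trans e2
  -- conclude F = 0
  have hF : ea * eb = ea * (b * a) := by
    have hz : (xx * dl) • ((dl * dl) • (ea * eb) - ((dl * dl) + 1) • (ea * (b * a)) +
          ea * (bi * ai)) -
        (xx * dl) • (ea * (bi * ai) - ea * (b * a)) -
        ((dl * (dl * li)) • (ea * eb) - (dl * (dl * li)) • (ea * (b * a))) +
        ((dl * (dl * la)) • (ea * eb) - (dl * (dl * la)) • (ea * (b * a))) = 0 := by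
      rw [← EqI, ← EqII]; abel
    have h3 : (dl * (dl * dl)) • (ea * eb - ea * (b * a)) = 0 := by
      rw [← hz]
      match_scalars <;>
        first
        | ring1
        | linear_combination (dl*dl) * hxx
        | linear_combination -(dl*dl) * hxx
    have h4 : dl • (dl • (dl • (ea * eb - ea * (b * a)))) =
        dl • (dl • (dl • (0 : M))) := by
      rw [smul_zero, smul_zero, smul_zero, smul_smul, smul_smul, mul_assoc]
      exact h3
    have h5 := smul_cancel' hdl (smul_cancel' hdl (smul_cancel' hdl h4))
    exact sub_eq_zero.mp h5
  -- conclude G = 0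
  have hbi2 : ea * bi = ea * b - dl • ea + dl • (ea * (b * a)) := by rw [hbi1, hF]
  have t1 : (ea * bi) * a = ea * (b * a) - (dl * la) • ea +
      dl • (ea * b + dl • (ea * (b * a)) - dl • ea) := by
    rw [hbi2, add_mul, sub_mul, smul_mul_assoc, smul_mul_assoc, heaa, mul_assoc, hUa,
      smul_smul]
  have t2 : (ea * bi) * ea = li • ea - (dl * xx) • ea + dl • ea := by
    rw [hbi2, add_mul, sub_mul, smul_mul_assoc, smul_mul_assoc, hUea, mul_assoc, k2,
      k1, smul_smul]
  have h := hxai (ea * bi)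
  rw [t1, t2, mul_assoc, hbi2] at h
  rw [h]
  match_scalars <;>
    first
    | ring1
    | linear_combination dl * hxx
    | linear_combination -dl * hxx

private lemma base_lemma {dli : S} {a ai y ea : M}
    (haai : a * ai = 1) (haia : ai * a = 1)
    (hea : ea = 1 - dli • (a - ai))
    (hcomm : a * y * a * y = y * a * y * a)
    (hyxye : y * a * y * ea = ea) :
    ea = ea * (y * (a * y)) ∧ ea = (y * (a * y)) * ea := by
  have ha1 : ∀ z : M, a * (ai * z) = z := fun z => by rw [← mul_assoc, haai, one_mul]
  have ha2 : ∀ z : M, ai * (a * z) = z := fun z => by rw [← mul_assoc, haia, one_mul]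
  have hau : a * (y * (a * y)) = (y * (a * y)) * a := by
    simpa [mul_assoc] using hcomm
  have haiu : ai * (y * (a * y)) = (y * (a * y)) * ai := by
    have h := congrArg (fun t => ai * (t * ai)) hau
    simpa [mul_assoc, ha1, ha2, haai, haia] using h.symm
  have hsub : (a - ai) * (y * (a * y)) = (y * (a * y)) * (a - ai) := by
    rw [sub_mul, mul_sub, hau, haiu]
  have heau : ea * (y * (a * y)) = (y * (a * y)) * ea := by
    rw [hea, sub_mul, one_mul, smul_mul_assoc, mul_sub, mul_one, mul_smul_comm, hsub]
  have hueaea : (y * (a * y)) * ea = ea := by simpa [mul_assoc] using hyxye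
  exact ⟨by rw [heau, hueaea], hueaea.symm⟩

private lemma step_lemma {la li dl dli xx : S} {a ai b bi ea eb y yp : M}
    (hla : la * li = 1) (hdl : dl * dli = 1) (hxx : xx * dl = dl - la + li)
    (haai : a * ai = 1) (haia : ai * a = 1) (hbbi : b * bi = 1) (hbib : bi * b = 1)
    (hbraid : a * b * a = b * a * b)
    (hea : ea = 1 - dli • (a - ai)) (heb : eb = 1 - dli • (b - bi))
    (heaa : ea * a = la • ea) (haea : a * ea = la • ea)
    (hebb : eb * b = la • eb)
    (hebaeb : eb * a * eb = li • eb) (hebaieb : eb * ai * eb = la • eb)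
    (hyb : y * b = b * y) (hybi : y * bi = bi * y)
    (hypb : yp * b = b * yp) (hypbi : yp * bi = bi * yp)
    (hIH1 : ea = ea * (y * (a * y))) (hIH2 : ea = (y * (a * y)) * ea)
    (hIH3 : ea = ea * (yp * (a * yp))) (hIH4 : ea = (yp * (a * yp)) * ea) :
    (eb = eb * (a * y * ai * b * (a * y * ai)) ∧
      eb = a * y * ai * b * (a * y * ai) * eb) ∧
    (eb = eb * (a * yp * a * b * (a * yp * a)) ∧
      eb = a * yp * a * b * (a * yp * a) * eb) := by
  have hkey : ea * (b * a) = ea * (bi * ai) :=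
    key_lemma hla hdl hxx haai haia hbbi hbib hbraid hea heb heaa haea hebb hebaeb
      hebaieb
  have ha1 : ∀ z : M, a * (ai * z) = z := fun z => by rw [← mul_assoc, haai, one_mul]
  have ha2 : ∀ z : M, ai * (a * z) = z := fun z => by rw [← mul_assoc, haia, one_mul]
  have hb1 : ∀ z : M, b * (bi * z) = z := fun z => by rw [← mul_assoc, hbbi, one_mul]
  have hb2 : ∀ z : M, bi * (b * z) = z := fun z => by rw [← mul_assoc, hbib, one_mul]
  have hbr : a * (b * a) = b * (a * b) := by simpa [mul_assoc] using hbraid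
  have hbr' : ∀ z : M, a * (b * (a * z)) = b * (a * (b * z)) := by
    intro z
    have h := congrArg (fun t => t * z) hbraid
    simpa [mul_assoc] using h
  have q1 : ∀ z : M, ai * (b * (a * z)) = b * (a * (bi * z)) := by
    intro z
    have h := congrArg (fun t => ai * (t * (bi * z))) hbraid
    simpa [mul_assoc, ha1, ha2, hb1, hb2, haai, haia, hbbi, hbib] using h.symm
  have q10 : ai * (b * a) = b * (a * bi) := by simpa using q1 1
  have q30 : ai * (bi * ai) = bi * (ai * bi) := by
    have h := congrArg
      (fun t => ai * (bi * (ai * (t * (bi * (ai * (bi * (1:M)))))))) hbraid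
    simpa [mul_assoc, ha1, ha2, hb1, hb2, haai, haia, hbbi, hbib] using h.symm
  have q40 : a * (bi * ai) = bi * (ai * b) := by
    have h := congrArg (fun t => bi * (ai * (t * (bi * (ai * (1:M)))))) hbraid
    simpa [mul_assoc, ha1, ha2, hb1, hb2, haai, haia, hbbi, hbib] using h
  have conjsub : ∀ z : M, (a - ai) * z = z * (b - bi) → ea * z = z * eb := by
    intro z h
    rw [hea, heb, sub_mul, one_mul, smul_mul_assoc, mul_sub, mul_one, mul_smul_comm, h]
  have c1 : ea * (b * a) = (b * a) * eb := by
    apply conjsub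
    rw [sub_mul, mul_sub]
    simp only [mul_assoc]
    rw [hbr, q10]
  have c2 : ea * (bi * ai) = (bi * ai) * eb := by
    apply conjsub
    rw [sub_mul, mul_sub]
    simp only [mul_assoc]
    rw [← q40, ← q30]
  have hC1 : a * (b * (ea * (bi * ai))) = eb := by
    rw [c2]
    simp only [mul_assoc, ha1, ha2, hb1, hb2]
  have hyb' : ∀ z : M, y * (b * z) = b * (y * z) := fun z => by
    rw [← mul_assoc, hyb, mul_assoc]
  have hybi' : ∀ z : M, bi * (y * z) = y * (bi * z) := fun z => by
    rw [← mul_assoc, ← hybi, mul_assoc]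
  have hypb' : ∀ z : M, yp * (b * z) = b * (yp * z) := fun z => by
    rw [← mul_assoc, hypb, mul_assoc]
  have hZn : a * y * ai * b * (a * y * ai) = a * (b * (y * (a * (y * (bi * ai))))) := by
    simp only [mul_assoc]
    rw [q1 (y * ai), hyb' (a * (bi * (y * ai))), hybi' ai]
  have hZp : a * yp * a * b * (a * yp * a) = a * (b * (yp * (a * (yp * (b * a))))) := by
    simp only [mul_assoc]
    rw [hbr' (yp * a), hypb' (a * (b * (yp * a))), ← hypb' a]
  constructor
  · constructor
    · have h1 : eb * (a * y * ai * b * (a * y * ai)) = eb := by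
        rw [hZn, ← hC1]
        have e : (a * (b * (ea * (bi * ai)))) * (a * (b * (y * (a * (y * (bi * ai)))))) =
            a * (b * ((ea * (y * (a * y))) * (bi * ai))) := by
          simp only [mul_assoc, ha1, ha2, hb1, hb2]
        rw [e, ← hIH1]
      exact h1.symm
    · have h2 : a * y * ai * b * (a * y * ai) * eb = eb := by
        rw [hZn]
        have e0 : (a * (b * (y * (a * (y * (bi * ai)))))) * eb =
            a * (b * (y * (a * (y * ((bi * ai) * eb))))) := by simp only [mul_assoc]
        rw [e0, ← c2]
        have e1 : a * (b * (y * (a * (y * (ea * (bi * ai)))))) =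
            a * (b * (((y * (a * y)) * ea) * (bi * ai))) := by simp only [mul_assoc]
        rw [e1, ← hIH2, hC1]
      exact h2.symm
  · constructor
    · have h3 : eb * (a * yp * a * b * (a * yp * a)) = eb := by
        rw [hZp, ← hC1]
        have e : (a * (b * (ea * (bi * ai)))) * (a * (b * (yp * (a * (yp * (b * a)))))) =
            a * (b * ((ea * (yp * (a * yp))) * (b * a))) := by
          simp only [mul_assoc, ha1, ha2, hb1, hb2]
        rw [e, ← hIH3, hkey]
      exact h3.symm
    · have h4 : a * yp * a * b * (a * yp * a) * eb = eb := by
        rw [hZp]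
        have e0 : (a * (b * (yp * (a * (yp * (b * a)))))) * eb =
            a * (b * (yp * (a * (yp * ((b * a) * eb))))) := by simp only [mul_assoc]
        rw [e0, ← c1]
        have e1 : a * (b * (yp * (a * (yp * (ea * (b * a)))))) =
            a * (b * (((yp * (a * yp)) * ea) * (b * a))) := by simp only [mul_assoc]
        rw [e1, ← hIH4, hkey, hC1]
      exact h4.symm


private lemma comm_inv {u v vi : M} (h : u * v = v * u) (h1 : v * vi = 1)
    (h2 : vi * v = 1) : u * vi = vi * u := by
  calc u * vi = vi * (v * (u * vi)) := by rw [← mul_assoc, h2, one_mul]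
    _ = vi * (u * (v * vi)) := by rw [← mul_assoc v u, ← h, mul_assoc]
    _ = vi * u := by rw [h1, mul_one]

private lemma mul_comm3 {x y z w : M} (hx : x * w = w * x) (hy : y * w = w * y)
    (hz : z * w = w * z) : (x * y * z) * w = w * (x * y * z) := by
  calc x * y * z * w = x * (y * (z * w)) := by simp only [mul_assoc]
    _ = x * (y * (w * z)) := by rw [hz]
    _ = x * ((y * w) * z) := by rw [← mul_assoc y w z]
    _ = x * ((w * y) * z) := by rw [hy]
    _ = (x * w) * (y * z) := by simp only [mul_assoc]
    _ = w * (x * y * z) := by rw [hx]; simp only [mul_assoc]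

end Abstract

private lemma mk_rel {x y : FreeAlgebra R (Gen n)} (h : Rel R lam lami deli q0 q1 A n x y) :
    mk R lam lami deli q0 q1 A n x = mk R lam lami deli q0 q1 A n y :=
  RingQuot.mkAlgHom_rel R h

private lemma bb_XXXi (u : ℕ) (hu : u - 1 < n - 1) : XX R lam lami deli q0 q1 A n u * XXi R lam lami deli q0 q1 A n u = 1 := by
  rw [XX, XXi, dif_pos hu, dif_pos hu, ← map_mul,
    mk_rel R lam lami deli q0 q1 A n (Rel.XXinv ⟨u-1, hu⟩), map_one]

private lemma bb_XXiX (u : ℕ) (hu : u - 1 < n - 1) : XXi R lam lami deli q0 q1 A n u * XX R lam lami deli q0 q1 A n u = 1 := by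
  rw [XX, XXi, dif_pos hu, dif_pos hu, ← map_mul,
    mk_rel R lam lami deli q0 q1 A n (Rel.XinvX ⟨u-1, hu⟩), map_one]

private lemma bb_ee (u : ℕ) (hu : u - 1 < n - 1) :
    ee R lam lami deli q0 q1 A n u = mk R lam lami deli q0 q1 A n (fe R deli ⟨u-1, hu⟩) := by
  simp only [ee, XX, XXi, dif_pos hu, fe, map_sub, map_smul, map_one]

private lemma bb_Xe (u : ℕ) (hu : u - 1 < n - 1) : XX R lam lami deli q0 q1 A n u * ee R lam lami deli q0 q1 A n u = lam • ee R lam lami deli q0 q1 A n u := by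
  rw [bb_ee R lam lami deli q0 q1 A n u hu, XX, dif_pos hu, ← map_mul,
    mk_rel R lam lami deli q0 q1 A n (Rel.Xe ⟨u-1, hu⟩), map_smul]

private lemma bb_eX (u : ℕ) (hu : u - 1 < n - 1) : ee R lam lami deli q0 q1 A n u * XX R lam lami deli q0 q1 A n u = lam • ee R lam lami deli q0 q1 A n u := by
  rw [bb_ee R lam lami deli q0 q1 A n u hu, XX, dif_pos hu, ← map_mul,
    mk_rel R lam lami deli q0 q1 A n (Rel.eX ⟨u-1, hu⟩), map_smul]

private lemma bb_braid (u : ℕ) (h1 : 1 ≤ u) (h2 : u < n - 1) :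
    XX R lam lami deli q0 q1 A n u * XX R lam lami deli q0 q1 A n (u+1) * XX R lam lami deli q0 q1 A n u = XX R lam lami deli q0 q1 A n (u+1) * XX R lam lami deli q0 q1 A n u * XX R lam lami deli q0 q1 A n (u+1) := by
  have hu : u - 1 < n - 1 := by omega
  have hu2 : u + 1 - 1 < n - 1 := by omega
  simp only [XX, dif_pos hu, dif_pos hu2, ← map_mul]
  exact mk_rel R lam lami deli q0 q1 A n
    (Rel.braid ⟨u-1, hu⟩ ⟨u+1-1, hu2⟩ (show u - 1 + 1 = u + 1 - 1 by omega))

private lemma bb_comm (u v : ℕ) (h1 : 1 ≤ v) (h2 : v + 1 < u) (hu : u - 1 < n - 1) :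
    XX R lam lami deli q0 q1 A n u * XX R lam lami deli q0 q1 A n v = XX R lam lami deli q0 q1 A n v * XX R lam lami deli q0 q1 A n u := by
  have hv : v - 1 < n - 1 := by omega
  simp only [XX, dif_pos hu, dif_pos hv, ← map_mul]
  exact mk_rel R lam lami deli q0 q1 A n
    (Rel.comm ⟨u-1, hu⟩ ⟨v-1, hv⟩ (show v - 1 + 1 < u - 1 by omega))

private lemma bb_eXe (u : ℕ) (h1 : 1 ≤ u) (h2 : u < n - 1) :
    ee R lam lami deli q0 q1 A n (u+1) * XX R lam lami deli q0 q1 A n u * ee R lam lami deli q0 q1 A n (u+1) = lami • ee R lam lami deli q0 q1 A n (u+1) := by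
  have hu : u - 1 < n - 1 := by omega
  have hu2 : u + 1 - 1 < n - 1 := by omega
  rw [bb_ee R lam lami deli q0 q1 A n (u+1) hu2, XX, dif_pos hu, ← map_mul, ← map_mul,
    mk_rel R lam lami deli q0 q1 A n
      (Rel.eXe ⟨u+1-1, hu2⟩ ⟨u-1, hu⟩ (show u - 1 + 1 = u + 1 - 1 by omega)), map_smul]

private lemma bb_eXinve (u : ℕ) (h1 : 1 ≤ u) (h2 : u < n - 1) :
    ee R lam lami deli q0 q1 A n (u+1) * XXi R lam lami deli q0 q1 A n u * ee R lam lami deli q0 q1 A n (u+1) = lam • ee R lam lami deli q0 q1 A n (u+1) := by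
  have hu : u - 1 < n - 1 := by omega
  have hu2 : u + 1 - 1 < n - 1 := by omega
  rw [bb_ee R lam lami deli q0 q1 A n (u+1) hu2, XXi, dif_pos hu, ← map_mul, ← map_mul,
    mk_rel R lam lami deli q0 q1 A n
      (Rel.eXinve ⟨u+1-1, hu2⟩ ⟨u-1, hu⟩ (show u - 1 + 1 = u + 1 - 1 by omega)), map_smul]

private lemma bb_Ycomm (u : ℕ) (h1 : 2 ≤ u) (hu : u - 1 < n - 1) :
    YY R lam lami deli q0 q1 A n * XX R lam lami deli q0 q1 A n u = XX R lam lami deli q0 q1 A n u * YY R lam lami deli q0 q1 A n := by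
  have hn : 0 < n := by omega
  rw [YY, dif_pos hn, XX, dif_pos hu, ← map_mul, ← map_mul,
    mk_rel R lam lami deli q0 q1 A n (Rel.Ycomm hn ⟨u-1, hu⟩ (show 0 < u - 1 by omega))]

private lemma bb_bYXYX (hn : 0 < n) (h1 : 0 < n - 1) :
    XX R lam lami deli q0 q1 A n 1 * YY R lam lami deli q0 q1 A n * XX R lam lami deli q0 q1 A n 1 * YY R lam lami deli q0 q1 A n = YY R lam lami deli q0 q1 A n * XX R lam lami deli q0 q1 A n 1 * YY R lam lami deli q0 q1 A n * XX R lam lami deli q0 q1 A n 1 := by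
  have hu : 1 - 1 < n - 1 := by omega
  simp only [XX, YY, dif_pos hu, dif_pos hn, ← map_mul]
  exact mk_rel R lam lami deli q0 q1 A n (Rel.bYXYX hn ⟨1-1, hu⟩ rfl)

private lemma bb_YXYe (hn : 0 < n) (h1 : 0 < n - 1) :
    YY R lam lami deli q0 q1 A n * XX R lam lami deli q0 q1 A n 1 * YY R lam lami deli q0 q1 A n * ee R lam lami deli q0 q1 A n 1 = ee R lam lami deli q0 q1 A n 1 := by
  have hu : 1 - 1 < n - 1 := by omega
  rw [bb_ee R lam lami deli q0 q1 A n 1 hu]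
  simp only [XX, YY, dif_pos hu, dif_pos hn, ← map_mul]
  exact mk_rel R lam lami deli q0 q1 A n (Rel.YXYe hn ⟨1-1, hu⟩ rfl)

private lemma bb_Yncomm : ∀ m u : ℕ, 1 ≤ m → m + 1 ≤ u → u - 1 < n - 1 →
    (Yn R lam lami deli q0 q1 A n m * XX R lam lami deli q0 q1 A n u = XX R lam lami deli q0 q1 A n u * Yn R lam lami deli q0 q1 A n m ∧ Yn R lam lami deli q0 q1 A n m * XXi R lam lami deli q0 q1 A n u = XXi R lam lami deli q0 q1 A n u * Yn R lam lami deli q0 q1 A n m) ∧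
    (Yp R lam lami deli q0 q1 A n m * XX R lam lami deli q0 q1 A n u = XX R lam lami deli q0 q1 A n u * Yp R lam lami deli q0 q1 A n m ∧ Yp R lam lami deli q0 q1 A n m * XXi R lam lami deli q0 q1 A n u = XXi R lam lami deli q0 q1 A n u * Yp R lam lami deli q0 q1 A n m) := by
  intro m
  induction m with
  | zero => intro u h1 h2 h3; exact absurd h1 (by omega)
  | succ k ih =>
    intro u h1 h2 h3
    have hXu1 : XX R lam lami deli q0 q1 A n u * XXi R lam lami deli q0 q1 A n u = 1 := bb_XXXi R lam lami deli q0 q1 A n u h3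
    have hXu2 : XXi R lam lami deli q0 q1 A n u * XX R lam lami deli q0 q1 A n u = 1 := bb_XXiX R lam lami deli q0 q1 A n u h3
    rcases Nat.eq_zero_or_pos k with hk | hk
    · subst hk
      have hY : YY R lam lami deli q0 q1 A n * XX R lam lami deli q0 q1 A n u = XX R lam lami deli q0 q1 A n u * YY R lam lami deli q0 q1 A n :=
        bb_Ycomm R lam lami deli q0 q1 A n u (by omega) h3
      have hYi : YY R lam lami deli q0 q1 A n * XXi R lam lami deli q0 q1 A n u = XXi R lam lami deli q0 q1 A n u * YY R lam lami deli q0 q1 A n := comm_inv hY hXu1 hXu2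
      exact ⟨⟨hY, hYi⟩, hY, hYi⟩
    · obtain ⟨j, rfl⟩ : ∃ j, k = j + 1 := ⟨k-1, by omega⟩
      have ihu := ih u (by omega) (by omega) h3
      have hj : (j+1) - 1 < n - 1 := by omega
      have hc := bb_comm R lam lami deli q0 q1 A n u (j+1) (by omega) (by omega) h3
      have hx1 : XX R lam lami deli q0 q1 A n (j+1) * XX R lam lami deli q0 q1 A n u = XX R lam lami deli q0 q1 A n u * XX R lam lami deli q0 q1 A n (j+1) := hc.symm
      have hXj1 : XX R lam lami deli q0 q1 A n (j+1) * XXi R lam lami deli q0 q1 A n (j+1) = 1 := bb_XXXi R lam lami deli q0 q1 A n (j+1) hj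
      have hXj2 : XXi R lam lami deli q0 q1 A n (j+1) * XX R lam lami deli q0 q1 A n (j+1) = 1 := bb_XXiX R lam lami deli q0 q1 A n (j+1) hj
      have hx2 : XXi R lam lami deli q0 q1 A n (j+1) * XX R lam lami deli q0 q1 A n u = XX R lam lami deli q0 q1 A n u * XXi R lam lami deli q0 q1 A n (j+1) :=
        (comm_inv hc hXj1 hXj2).symm
      have r1 : Yn R lam lami deli q0 q1 A n (j+2) * XX R lam lami deli q0 q1 A n u = XX R lam lami deli q0 q1 A n u * Yn R lam lami deli q0 q1 A n (j+2) :=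
        mul_comm3 hx1 ihu.1.1 hx2
      have r2 : Yp R lam lami deli q0 q1 A n (j+2) * XX R lam lami deli q0 q1 A n u = XX R lam lami deli q0 q1 A n u * Yp R lam lami deli q0 q1 A n (j+2) :=
        mul_comm3 hx1 ihu.2.1 hx1
      exact ⟨⟨r1, comm_inv r1 hXu1 hXu2⟩, r2, comm_inv r2 hXu1 hXu2⟩

/-- In `BB_n(R)`: `e_i = e_i Y_i X_i Y_i = Y_i X_i Y_i e_i` and
`e_i = e_i Y'_i X_i Y'_i = Y'_i X_i Y'_i e_i` (Lemma 4, (\ref{lem2c}), (\ref{lem2cs})). -/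
theorem BB_eYXY (R : Type) [CommRing R] [IsDomain R]
    (q qi lam lami del deli q0 q0i q1 A x : R)
    (hq : q * qi = 1) (hlam : lam * lami = 1) (hdel : del * deli = 1) (hq0u : q0 * q0i = 1)
    (hdelta : del = q - qi) (hx : x * del = del - lam + lami) (n : ℕ) :
    ∀ i, 1 ≤ i → i ≤ n - 1 →
      ee R lam lami deli q0 q1 A n i = ee R lam lami deli q0 q1 A n i * (Yn R lam lami deli q0 q1 A n i * XX R lam lami deli q0 q1 A n i * Yn R lam lami deli q0 q1 A n i) ∧
      ee R lam lami deli q0 q1 A n i = (Yn R lam lami deli q0 q1 A n i * XX R lam lami deli q0 q1 A n i * Yn R lam lami deli q0 q1 A n i) * ee R lam lami deli q0 q1 A n i ∧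
      ee R lam lami deli q0 q1 A n i = ee R lam lami deli q0 q1 A n i * (Yp R lam lami deli q0 q1 A n i * XX R lam lami deli q0 q1 A n i * Yp R lam lami deli q0 q1 A n i) ∧
      ee R lam lami deli q0 q1 A n i = (Yp R lam lami deli q0 q1 A n i * XX R lam lami deli q0 q1 A n i * Yp R lam lami deli q0 q1 A n i) * ee R lam lami deli q0 q1 A n i := by
  intro i
  induction i with
  | zero => intro h1 _; exact absurd h1 (by omega)
  | succ k ih =>
    intro h1 h2
    rcases Nat.eq_zero_or_pos k with hk | hk
    · subst hk
      have hn : 0 < n := by omega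
      have hn1 : 0 < n - 1 := by omega
      have hu : 1 - 1 < n - 1 := by omega
      have hB := base_lemma (dli := deli)
        (a := XX R lam lami deli q0 q1 A n 1) (ai := XXi R lam lami deli q0 q1 A n 1) (y := YY R lam lami deli q0 q1 A n) (ea := ee R lam lami deli q0 q1 A n 1)
        (bb_XXXi R lam lami deli q0 q1 A n 1 hu) (bb_XXiX R lam lami deli q0 q1 A n 1 hu)
        rfl (bb_bYXYX R lam lami deli q0 q1 A n hn hn1)
        (bb_YXYe R lam lami deli q0 q1 A n hn hn1)
      obtain ⟨e1, e2⟩ := hB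
      have f1 : ee R lam lami deli q0 q1 A n 1 = ee R lam lami deli q0 q1 A n 1 * (YY R lam lami deli q0 q1 A n * XX R lam lami deli q0 q1 A n 1 * YY R lam lami deli q0 q1 A n) := by
        rw [mul_assoc]; exact e1
      have f2 : ee R lam lami deli q0 q1 A n 1 = YY R lam lami deli q0 q1 A n * XX R lam lami deli q0 q1 A n 1 * YY R lam lami deli q0 q1 A n * ee R lam lami deli q0 q1 A n 1 := by
        rw [mul_assoc (YY R lam lami deli q0 q1 A n) (XX R lam lami deli q0 q1 A n 1) (YY R lam lami deli q0 q1 A n)]; exact e2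
      exact ⟨f1, f2, f1, f2⟩
    · obtain ⟨m, rfl⟩ : ∃ m, k = m + 1 := ⟨k - 1, by omega⟩
      obtain ⟨i1, i2, i3, i4⟩ := ih (by omega) (by omega)
      have hu1 : (m+1) - 1 < n - 1 := by omega
      have hu2 : (m+2) - 1 < n - 1 := by omega
      have hcomm := bb_Yncomm R lam lami deli q0 q1 A n (m+1) (m+2) (by omega) (by omega) hu2
      have i1' : ee R lam lami deli q0 q1 A n (m+1) = ee R lam lami deli q0 q1 A n (m+1) * (Yn R lam lami deli q0 q1 A n (m+1) * (XX R lam lami deli q0 q1 A n (m+1) * Yn R lam lami deli q0 q1 A n (m+1))) := by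
        simp only [mul_assoc] at i1; exact i1
      have i2' : ee R lam lami deli q0 q1 A n (m+1) = (Yn R lam lami deli q0 q1 A n (m+1) * (XX R lam lami deli q0 q1 A n (m+1) * Yn R lam lami deli q0 q1 A n (m+1))) * ee R lam lami deli q0 q1 A n (m+1) := by
        rw [← mul_assoc]; exact i2
      have i3' : ee R lam lami deli q0 q1 A n (m+1) = ee R lam lami deli q0 q1 A n (m+1) * (Yp R lam lami deli q0 q1 A n (m+1) * (XX R lam lami deli q0 q1 A n (m+1) * Yp R lam lami deli q0 q1 A n (m+1))) := by
        simp only [mul_assoc] at i3; exact i3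
      have i4' : ee R lam lami deli q0 q1 A n (m+1) = (Yp R lam lami deli q0 q1 A n (m+1) * (XX R lam lami deli q0 q1 A n (m+1) * Yp R lam lami deli q0 q1 A n (m+1))) * ee R lam lami deli q0 q1 A n (m+1) := by
        rw [← mul_assoc]; exact i4
      have hS := step_lemma hlam hdel hx
        (bb_XXXi R lam lami deli q0 q1 A n (m+1) hu1)
        (bb_XXiX R lam lami deli q0 q1 A n (m+1) hu1)
        (bb_XXXi R lam lami deli q0 q1 A n (m+2) hu2)
        (bb_XXiX R lam lami deli q0 q1 A n (m+2) hu2)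
        (bb_braid R lam lami deli q0 q1 A n (m+1) (by omega) (by omega))
        rfl rfl
        (bb_eX R lam lami deli q0 q1 A n (m+1) hu1)
        (bb_Xe R lam lami deli q0 q1 A n (m+1) hu1)
        (bb_eX R lam lami deli q0 q1 A n (m+2) hu2)
        (bb_eXe R lam lami deli q0 q1 A n (m+1) (by omega) (by omega))
        (bb_eXinve R lam lami deli q0 q1 A n (m+1) (by omega) (by omega))
        hcomm.1.1 hcomm.1.2 hcomm.2.1 hcomm.2.2
        i1' i2' i3' i4'
      exact ⟨hS.1.1, hS.1.2, hS.2.1, hS.2.2⟩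

end BMWB
end

section
/- Suppose that in BB_2(R) the element e_1 is nonzero and has vanishing annihilator ideal in R (i.e., for r ∈ R, r·e_1 = 0 implies r = 0). Then A(1 − q0λ) = q1·x. If in addition e_1 and Y·e_1 are R-linearly independent in BB_2(R), then q0 − q0⁻¹ = −δ. -/
namespace BMWB

variable (R : Type) [CommRing R]

variable (lam lami deli q0 q1 A : R) (n : ℕ)

/-!
Write `X = X_1`, `e = e_1`. The quadratic relation gives `Y⁻¹ = q0⁻¹ (Y - q1)`, and `Y X Y e = e`
says `X (Y e) = Y⁻¹ e`. Sandwiching this between `e`'s evaluates `e X Y e` in two ways, as `λ A e`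
and as `q0⁻¹ (A - q1 x) e` (using `e² = x e`); when `e` is torsion-free this is the first constraint.
Applying `X⁻¹` instead writes both `X (Y e)` and `X⁻¹ (Y e)` in the span of `e` and `Y e`, while
`X - X⁻¹ = δ (1 - e)` turns their difference into `δ (Y e) - δ A e`. Comparing coefficients of `Y e`
gives `q0⁻¹ - q0 = δ`.
-/

variable {R lam lami deli q0 q1 A n}

local notation "𝐗" => XX R lam lami deli q0 q1 A n 1
local notation "𝐗'" => XXi R lam lami deli q0 q1 A n 1
local notation "𝐘" => YY R lam lami deli q0 q1 A n
local notation "𝐘'" => YYi R lam lami deli q0 q1 A n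
local notation "𝐞" => ee R lam lami deli q0 q1 A n 1

theorem mk_eq_of_rel {a b : FreeAlgebra R (Gen n)} (h : Rel R lam lami deli q0 q1 A n a b) :
    mk R lam lami deli q0 q1 A n a = mk R lam lami deli q0 q1 A n b :=
  RingQuot.mkAlgHom_rel R h

theorem XX_one_sub_XXi_one {del : R} (hdel : del * deli = 1) : 𝐗 - 𝐗' = del • (1 - 𝐞) := by
  rw [ee, sub_sub_cancel, smul_smul, hdel, one_smul]

section Y

variable (hn : 0 < n)
include hn

theorem YY_eq_mk : 𝐘 = mk R lam lami deli q0 q1 A n (fY R hn) := dif_pos hn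

theorem YYi_eq_mk : 𝐘' = mk R lam lami deli q0 q1 A n (fYinv R hn) := dif_pos hn

theorem YY_mul_YYi : 𝐘 * 𝐘' = 1 := by
  rw [YY_eq_mk hn, YYi_eq_mk hn, ← map_mul, ← map_one (mk R lam lami deli q0 q1 A n)]
  exact mk_eq_of_rel (.YYinv hn)

theorem YYi_mul_YY : 𝐘' * 𝐘 = 1 := by
  rw [YY_eq_mk hn, YYi_eq_mk hn, ← map_mul, ← map_one (mk R lam lami deli q0 q1 A n)]
  exact mk_eq_of_rel (.YinvY hn)

theorem YY_mul_self : 𝐘 * 𝐘 = q1 • 𝐘 + q0 • 1 := by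
  rw [YY_eq_mk hn, ← map_mul, ← map_smul, ← map_one (mk R lam lami deli q0 q1 A n), ← map_smul,
    ← map_add]
  exact mk_eq_of_rel (.Ysq hn)

theorem YYi_eq {q0i : R} (hq0 : q0 * q0i = 1) : 𝐘' = q0i • 𝐘 - (q0i * q1) • 1 := by
  have hinv : (q0i • 𝐘 - (q0i * q1) • 1) * 𝐘 = 1 := by
    rw [sub_mul, smul_mul_assoc, smul_mul_assoc, one_mul, YY_mul_self hn, smul_add, smul_smul,
      smul_smul, mul_comm q0i q0, hq0, one_smul, mul_comm q0i q1, add_sub_cancel_left]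
  exact (left_inv_eq_right_inv hinv (YY_mul_YYi hn)).symm

end Y

section X

variable (hn : 1 < n)
include hn

theorem XX_one_eq_mk :
    𝐗 = mk R lam lami deli q0 q1 A n (fX R ⟨0, Nat.sub_pos_of_lt hn⟩) :=
  dif_pos (Nat.sub_pos_of_lt hn)

theorem XXi_one_eq_mk :
    𝐗' = mk R lam lami deli q0 q1 A n (fXinv R ⟨0, Nat.sub_pos_of_lt hn⟩) :=
  dif_pos (Nat.sub_pos_of_lt hn)

theorem ee_one_eq_mk :
    𝐞 = mk R lam lami deli q0 q1 A n (fe R deli ⟨0, Nat.sub_pos_of_lt hn⟩) := by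
  rw [ee, fe, map_sub, map_one, map_smul, map_sub, XX_one_eq_mk hn, XXi_one_eq_mk hn]

theorem XXi_one_mul_XX_one : 𝐗' * 𝐗 = 1 := by
  rw [XX_one_eq_mk hn, XXi_one_eq_mk hn, ← map_mul, ← map_one (mk R lam lami deli q0 q1 A n)]
  exact mk_eq_of_rel (.XinvX _)

theorem XX_one_mul_ee_one : 𝐗 * 𝐞 = lam • 𝐞 := by
  rw [XX_one_eq_mk hn, ee_one_eq_mk hn, ← map_mul, ← map_smul]
  exact mk_eq_of_rel (.Xe _)

theorem ee_one_mul_XX_one : 𝐞 * 𝐗 = lam • 𝐞 := by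
  rw [XX_one_eq_mk hn, ee_one_eq_mk hn, ← map_mul, ← map_smul]
  exact mk_eq_of_rel (.eX _)

theorem YY_mul_XX_one_mul_YY_mul_ee_one : 𝐘 * 𝐗 * 𝐘 * 𝐞 = 𝐞 := by
  rw [XX_one_eq_mk hn, YY_eq_mk (Nat.zero_lt_of_lt hn), ee_one_eq_mk hn, ← map_mul, ← map_mul,
    ← map_mul]
  exact mk_eq_of_rel (.YXYe _ _ rfl)

theorem ee_one_mul_YY_mul_ee_one : 𝐞 * 𝐘 * 𝐞 = A • 𝐞 := by
  rw [YY_eq_mk (Nat.zero_lt_of_lt hn), ee_one_eq_mk hn, ← map_mul, ← map_mul, ← map_smul]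
  exact mk_eq_of_rel (.eYe _ _ rfl)

theorem XXi_one_mul_ee_one (hlam : lam * lami = 1) : 𝐗' * 𝐞 = lami • 𝐞 :=
  calc 𝐗' * 𝐞 = (lami * lam) • (𝐗' * 𝐞) := by rw [mul_comm, hlam, one_smul]
    _ = lami • (𝐗' * (𝐗 * 𝐞)) := by rw [XX_one_mul_ee_one hn, mul_smul_comm, smul_smul]
    _ = lami • 𝐞 := by rw [← mul_assoc, XXi_one_mul_XX_one hn, one_mul]

theorem ee_one_mul_self {del x : R} (hlam : lam * lami = 1) (hdel : del * deli = 1)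
    (hx : x * del = del - lam + lami) : 𝐞 * 𝐞 = x • 𝐞 := by
  have hx' : x = 1 - deli * (lam - lami) := by
    linear_combination deli * hx + (1 - x) * hdel
  calc 𝐞 * 𝐞 = (1 - deli • (𝐗 - 𝐗')) * 𝐞 := rfl
    _ = 𝐞 - deli • (𝐗 * 𝐞 - 𝐗' * 𝐞) := by rw [sub_mul, one_mul, smul_mul_assoc, sub_mul]
    _ = x • 𝐞 := by rw [XX_one_mul_ee_one hn, XXi_one_mul_ee_one hn hlam, hx']; module

theorem XX_one_mul_YY_mul_ee_one : 𝐗 * (𝐘 * 𝐞) = 𝐘' * 𝐞 :=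
  calc 𝐗 * (𝐘 * 𝐞) = (𝐘' * 𝐘) * (𝐗 * (𝐘 * 𝐞)) := by
        rw [YYi_mul_YY (Nat.zero_lt_of_lt hn), one_mul]
    _ = 𝐘' * (𝐘 * 𝐗 * 𝐘 * 𝐞) := by simp only [mul_assoc]
    _ = 𝐘' * 𝐞 := by rw [YY_mul_XX_one_mul_YY_mul_ee_one hn]

theorem YYi_mul_ee_one {q0i : R} (hq0 : q0 * q0i = 1) :
    𝐘' * 𝐞 = q0i • (𝐘 * 𝐞) - (q0i * q1) • 𝐞 := by
  rw [YYi_eq (Nat.zero_lt_of_lt hn) hq0, sub_mul, smul_mul_assoc, smul_mul_assoc, one_mul]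

theorem smul_ee_one_eq_zero {del x q0i : R} (hlam : lam * lami = 1) (hdel : del * deli = 1)
    (hx : x * del = del - lam + lami) (hq0 : q0 * q0i = 1) :
    (lam * A - q0i * (A - q1 * x)) • 𝐞 = 0 := by
  have h : 𝐞 * 𝐗 * (𝐘 * 𝐞) = 𝐞 * (𝐗 * (𝐘 * 𝐞)) := mul_assoc _ _ _
  rw [ee_one_mul_XX_one hn, smul_mul_assoc, ← mul_assoc, ee_one_mul_YY_mul_ee_one hn,
    XX_one_mul_YY_mul_ee_one hn, YYi_mul_ee_one hn hq0, mul_sub, mul_smul_comm, mul_smul_comm,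
    ← mul_assoc, ee_one_mul_YY_mul_ee_one hn, ee_one_mul_self hn hlam hdel hx] at h
  linear_combination (norm := module) h

theorem XXi_one_mul_YY_mul_ee_one {q0i : R} (hlam : lam * lami = 1) (hq0 : q0 * q0i = 1) :
    𝐗' * (𝐘 * 𝐞) = q0 • (𝐘 * 𝐞) + (q1 * lami) • 𝐞 := by
  have h : 𝐘 * 𝐞 = q0i • (𝐗' * (𝐘 * 𝐞)) - (q0i * q1 * lami) • 𝐞 :=
    calc 𝐘 * 𝐞 = 𝐗' * (𝐗 * (𝐘 * 𝐞)) := by rw [← mul_assoc, XXi_one_mul_XX_one hn, one_mul]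
      _ = _ := by
        rw [XX_one_mul_YY_mul_ee_one hn, YYi_mul_ee_one hn hq0, mul_sub, mul_smul_comm,
          mul_smul_comm, XXi_one_mul_ee_one hn hlam, smul_smul]
  linear_combination (norm := module) -q0 • h - hq0 • (𝐗' * (𝐘 * 𝐞) - (q1 * lami) • 𝐞)

theorem smul_ee_one_add_smul_YY_mul_ee_one_eq_zero {del q0i : R} (hlam : lam * lami = 1)
    (hdel : del * deli = 1) (hq0 : q0 * q0i = 1) :
    (del * A - q0i * q1 - q1 * lami) • 𝐞 + (q0i - q0 - del) • (𝐘 * 𝐞) = 0 := by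
  have h : 𝐗 * (𝐘 * 𝐞) - 𝐗' * (𝐘 * 𝐞) = del • (𝐘 * 𝐞) - (del * A) • 𝐞 := by
    rw [← sub_mul, XX_one_sub_XXi_one hdel, smul_mul_assoc, sub_mul, one_mul, ← mul_assoc,
      ee_one_mul_YY_mul_ee_one hn, smul_sub, smul_smul]
  rw [XX_one_mul_YY_mul_ee_one hn, YYi_mul_ee_one hn hq0,
    XXi_one_mul_YY_mul_ee_one hn hlam hq0] at h
  linear_combination (norm := module) h

end X

theorem BB_parameter_constraints_general (R : Type) [CommRing R]
    (lam lami del deli q0 q0i q1 A x : R)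
    (hlam : lam * lami = 1) (hdel : del * deli = 1) (hq0u : q0 * q0i = 1)
    (hx : x * del = del - lam + lami)
    (h2 : ∀ r : R, r • ee R lam lami deli q0 q1 A 2 1 = 0 → r = 0) :
    A * (1 - q0 * lam) = q1 * x ∧
    (LinearIndependent R ![ee R lam lami deli q0 q1 A 2 1, YY R lam lami deli q0 q1 A 2 * ee R lam lami deli q0 q1 A 2 1] →
      q0 - q0i = -del) := by
  have hn : 1 < 2 := one_lt_two
  refine ⟨?_, fun hli => ?_⟩
  · have h := h2 _ (smul_ee_one_eq_zero hn hlam hdel hx hq0u)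
    linear_combination (-q0) * h + (q1 * x - A) * hq0u
  · obtain ⟨-, h⟩ := LinearIndependent.pair_iff.1 hli _ _
      (smul_ee_one_add_smul_YY_mul_ee_one_eq_zero hn hlam hdel hq0u)
    linear_combination -h

/-- Nondegeneracy of `BB_2(R)` forces relations among the parameters: `A(1−q0λ) = q1 x`,
and if moreover `e_1` and `Y e_1` are linearly independent, `q0 − q0⁻¹ = −δ` (Lemma 5 / 6). -/
theorem BB_parameter_constraints (R : Type) [CommRing R] [IsDomain R]
    (q qi lam lami del deli q0 q0i q1 A x : R)
    (hq : q * qi = 1) (hlam : lam * lami = 1) (hdel : del * deli = 1) (hq0u : q0 * q0i = 1)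
    (hdelta : del = q - qi) (hx : x * del = del - lam + lami)
    (h1 : ee R lam lami deli q0 q1 A 2 1 ≠ 0)
    (h2 : ∀ r : R, r • ee R lam lami deli q0 q1 A 2 1 = 0 → r = 0) :
    A * (1 - q0 * lam) = q1 * x ∧
    (LinearIndependent R ![ee R lam lami deli q0 q1 A 2 1, YY R lam lami deli q0 q1 A 2 * ee R lam lami deli q0 q1 A 2 1] →
      q0 - q0i = -del) :=
  BB_parameter_constraints_general R lam lami del deli q0 q0i q1 A x hlam hdel hq0u hx h2

end BMWB
end
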